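/- Let a₁, a₂, a₃ ∈ ℂ and define U(t) = −2(1/(t−a₁) + 1/(t−a₂) + 1/(t−a₃)) for t ∈ ℂ \ {a₁, a₂, a₃}. Then U satisfies the third-order differential equation U''' − 2UU'' + 3(U')² − (1/8)(6U' − U²)² = 0 at every point of ℂ \ {a₁, a₂, a₃}. -/

import Mathlib

/-! Writing `xᵢ = (t - aᵢ)⁻¹`, the `n`-th derivative of `U` is `-2 (-1)ⁿ n! Σ xᵢⁿ⁺¹`, so the
differential expression becomes a polynomial in `x₁, x₂, x₃`, and that polynomial vanishes
identically. -/

/-- `U(t) = −2(1/(t−a₁) + 1/(t−a₂) + 1/(t−a₃))`. -/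
noncomputable def Usol (a1 a2 a3 : ℂ) : ℂ → ℂ :=
  fun t => -2 * ((t - a1)⁻¹ + (t - a2)⁻¹ + (t - a3)⁻¹)

open scoped Nat

section

variable {𝕜 : Type*} [NontriviallyNormedField 𝕜]

theorem iteratedDeriv_inv_sub (n : ℕ) (a t : 𝕜) :
    iteratedDeriv n (fun s => (s - a)⁻¹) t = (-1) ^ n * n ! * ((t - a)⁻¹) ^ (n + 1) := by
  simp only [iteratedDeriv_comp_sub_const n Inv.inv a, iteratedDeriv_eq_iterate, iter_deriv_inv]
  rw [show (-1 - n : ℤ) = -((n + 1 : ℕ) : ℤ) by push_cast; ring, zpow_neg, zpow_natCast, inv_pow]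

theorem contDiffAt_inv_sub {n : WithTop ℕ∞} {a t : 𝕜} (h : t ≠ a) :
    ContDiffAt 𝕜 n (fun s => (s - a)⁻¹) t :=
  (contDiffAt_id.sub contDiffAt_const).inv (sub_ne_zero.mpr h)

end

theorem iteratedDeriv_Usol (n : ℕ) {a1 a2 a3 t : ℂ} (h1 : t ≠ a1) (h2 : t ≠ a2) (h3 : t ≠ a3) :
    iteratedDeriv n (Usol a1 a2 a3) t = -2 * ((-1) ^ n * n !) *
      ((t - a1)⁻¹ ^ (n + 1) + (t - a2)⁻¹ ^ (n + 1) + (t - a3)⁻¹ ^ (n + 1)) := by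
  have hc : ∀ {a}, t ≠ a → ContDiffAt ℂ n (fun s => (s - a)⁻¹) t := contDiffAt_inv_sub
  have h12 := (hc h1).add (hc h2)
  unfold Usol
  rw [iteratedDeriv_const_mul _ (h12.add (hc h3)), iteratedDeriv_fun_add h12 (hc h3),
    iteratedDeriv_fun_add (hc h1) (hc h2)]
  simp only [iteratedDeriv_inv_sub]
  ring

/-- The function `U(t) = −2(1/(t−a₁) + 1/(t−a₂) + 1/(t−a₃))` satisfies
`U''' − 2UU'' + 3(U')² − (1/8)(6U' − U²)² = 0` on `ℂ \ {a₁, a₂, a₃}`. -/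
theorem Usol_satisfies_third_order_equation (a1 a2 a3 : ℂ) :
    ∀ t : ℂ, t ≠ a1 → t ≠ a2 → t ≠ a3 →
      iteratedDeriv 3 (Usol a1 a2 a3) t
        - 2 * Usol a1 a2 a3 t * iteratedDeriv 2 (Usol a1 a2 a3) t
        + 3 * (deriv (Usol a1 a2 a3) t) ^ 2
        - 1 / 8 * (6 * deriv (Usol a1 a2 a3) t - (Usol a1 a2 a3 t) ^ 2) ^ 2 = 0 := by
  intro t h1 h2 h3
  rw [← iteratedDeriv_one, iteratedDeriv_Usol 1 h1 h2 h3, iteratedDeriv_Usol 2 h1 h2 h3,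
    iteratedDeriv_Usol 3 h1 h2 h3, Usol]
  simp only [Nat.factorial]
  push_cast
  ring
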